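/- arXiv:math/0511242 — 4 statements merged into one kernel-verified Lean document; each statement's English description precedes it below -/
import Mathlib

section
/- Let A be a (not necessarily commutative) unital ring, d : A → A an additive map, and ω ∈ A, satisfying: (i) d(d(a)) = 0 for all a ∈ A; (ii) d(ω·a) = d(ω)·a − ω·d(a) for all a ∈ A; (iii) d(d(ω)·a) = d(ω)·d(a) for all a ∈ A. Define ∇(a) = d(a) + ω·a and F = d(ω) + ω·ω. Then for every N ≥ 1 and every a ∈ A, the (2N+1)-fold iterate of ∇ satisfies ∇^{2N+1}(a) = F^N·∇(a). -/
/-! Two applications of `∇` multiply by the curvature: expanding `∇ (∇ a)`, the term `d (d a)`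
vanishes and the odd Leibniz rule for `ω` cancels the cross terms `± ω * d a`, leaving
`(d ω + ω * ω) * a`. Hence `∇^[2N] = (F * ·)^[N] = (F ^ N * ·)`, and one more `∇` gives the claim. -/

theorem Function.iterate_two_mul_add_one_of_apply_apply_eq_smul {M α : Type*} [Monoid M]
    [MulAction M α] {f : α → α} {c : M} (hf : ∀ x, f (f x) = c • x) (n : ℕ) (x : α) :
    f^[2 * n + 1] x = c ^ n • f x := by
  have hf2 : f^[2] = (c • ·) := funext hf
  rw [Function.iterate_succ_apply, Function.iterate_mul, hf2, smul_iterate]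

theorem covariant_derivative_sq_eq_curvature_mul {A : Type*} [Ring A] {d : A → A}
    (hd_add : ∀ a b : A, d (a + b) = d a + d b) (hd_sq : ∀ a : A, d (d a) = 0) {ω : A}
    (hleibniz : ∀ a : A, d (ω * a) = d ω * a - ω * d a) (a : A) :
    d (d a + ω * a) + ω * (d a + ω * a) = (d ω + ω * ω) * a := by
  rw [hd_add, hd_sq, hleibniz]
  noncomm_ring

theorem nabla_iterate_odd_eq_curvature_pow_mul_nabla_general
    (A : Type*) [Ring A] (d : A → A)
    (hd_add : ∀ a b : A, d (a + b) = d a + d b)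
    (ω : A)
    (hd_sq : ∀ a : A, d (d a) = 0)
    (hleibniz : ∀ a : A, d (ω * a) = d ω * a - ω * d a)
    (nabla : A → A) (hnabla : ∀ a : A, nabla a = d a + ω * a)
    (F : A) (hF : F = d ω + ω * ω) :
    ∀ N : ℕ, 1 ≤ N → ∀ a : A, nabla^[2 * N + 1] a = F ^ N * nabla a := by
  have hnabla_sq : ∀ a, nabla (nabla a) = F • a := fun a => by
    rw [hnabla, hnabla, hF, smul_eq_mul,
      covariant_derivative_sq_eq_curvature_mul hd_add hd_sq hleibniz]
  intro N _ a
  exact Function.iterate_two_mul_add_one_of_apply_apply_eq_smul hnabla_sq N a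

/-- Under the hypotheses (i) `d² = 0`, (ii) the odd Leibniz rule for `ω`,
(iii) the even Leibniz rule for `d ω`, the `(2N+1)`-fold iterate of the covariant
derivative `∇ a = d a + ω * a` equals `F^N * ∇ a`, where `F = d ω + ω * ω`. -/
theorem nabla_iterate_odd_eq_curvature_pow_mul_nabla
    (A : Type*) [Ring A] (d : A → A)
    (hd_add : ∀ a b : A, d (a + b) = d a + d b)
    (ω : A)
    (hd_sq : ∀ a : A, d (d a) = 0)
    (hleibniz : ∀ a : A, d (ω * a) = d ω * a - ω * d a)
    (hleibniz' : ∀ a : A, d (d ω * a) = d ω * d a)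
    (nabla : A → A) (hnabla : ∀ a : A, nabla a = d a + ω * a)
    (F : A) (hF : F = d ω + ω * ω) :
    ∀ N : ℕ, 1 ≤ N → ∀ a : A, nabla^[2 * N + 1] a = F ^ N * nabla a :=
  nabla_iterate_odd_eq_curvature_pow_mul_nabla_general A d hd_add ω hd_sq hleibniz nabla hnabla F hF
end

section
/- Let A be a (not necessarily commutative) unital ring, δ : A → A an additive map, and ω ∈ A, satisfying: (i) δ(δ(δ(a))) = 0 for all a ∈ A; (ii) δ(ω·a) = δ(ω)·a − ω·δ(a) for all a ∈ A; (iii) δ(δ(ω)·a) = δ(δ(ω))·a + δ(ω)·δ(a) for all a ∈ A. Define ∇ : A → A by ∇(a) = δ(a) + ω·a. Then for every a ∈ A the 3-curvature is given by ∇³(a) = (δ²(ω) + δ(ω)·ω + ω³)·a + (δ(ω) + ω²)·δ(a) + ω·δ²(a). -/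
/-! The square of `∇` is `δ²` plus multiplication by the curvature `F = δ ω + ω²`: the odd Leibniz
rule cancels the cross terms `± ω δ a`. Applying `∇` once more, `δ³ = 0` kills the top term, and
the even Leibniz rule together with the odd one again expands `δ (F a)`, where the terms
`± ω δ(ω) a` cancel. -/

section CovariantDiff

variable {A : Type*} [Ring A] (δ : A →+ A) (ω : A)

def covariantDiff (a : A) : A := δ a + ω * a

variable {δ ω}

theorem covariantDiff_covariantDiff (hleibniz : ∀ a : A, δ (ω * a) = δ ω * a - ω * δ a)
    (a : A) :
    covariantDiff δ ω (covariantDiff δ ω a) = δ (δ a) + (δ ω + ω * ω) * a := by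
  simp only [covariantDiff, map_add, hleibniz, add_mul, mul_add, mul_assoc]
  abel

theorem covariantDiff_cube (hδ_cube : ∀ a : A, δ (δ (δ a)) = 0)
    (hleibniz : ∀ a : A, δ (ω * a) = δ ω * a - ω * δ a)
    (hleibniz' : ∀ a : A, δ (δ ω * a) = δ (δ ω) * a + δ ω * δ a) (a : A) :
    covariantDiff δ ω (covariantDiff δ ω (covariantDiff δ ω a)) =
      (δ (δ ω) + δ ω * ω + ω * ω * ω) * a + (δ ω + ω * ω) * δ a + ω * δ (δ a) := by
  rw [covariantDiff_covariantDiff hleibniz]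
  simp only [covariantDiff, map_add, map_sub, hδ_cube, add_mul, mul_add, mul_assoc, hleibniz,
    hleibniz']
  abel

end CovariantDiff

/-- For an additive map `δ` with `δ³ = 0`, satisfying the odd Leibniz rule
for `ω` and the even Leibniz rule for `δ ω`, the 3-curvature of `∇ a = δ a + ω * a` is
`∇³(a) = (δ²(ω) + δ(ω)ω + ω³)a + (δ(ω) + ω²)δ(a) + ω δ²(a)`. -/
theorem nabla_cube_eq
    (A : Type*) [Ring A] (δ : A → A)
    (hδ_add : ∀ a b : A, δ (a + b) = δ a + δ b)
    (ω : A)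
    (hδ_cube : ∀ a : A, δ (δ (δ a)) = 0)
    (hleibniz : ∀ a : A, δ (ω * a) = δ ω * a - ω * δ a)
    (hleibniz' : ∀ a : A, δ (δ ω * a) = δ (δ ω) * a + δ ω * δ a)
    (nabla : A → A) (hnabla : ∀ a : A, nabla a = δ a + ω * a) :
    ∀ a : A, nabla (nabla (nabla a)) =
      (δ (δ ω) + δ ω * ω + ω * ω * ω) * a + (δ ω + ω * ω) * δ a + ω * δ (δ a) := by
  let δ' : A →+ A := AddMonoidHom.mk' δ hδ_add
  have hnabla' : nabla = covariantDiff δ' ω := funext hnabla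
  rw [hnabla']
  exact covariantDiff_cube (δ := δ') hδ_cube hleibniz hleibniz'
end

section
/- Let V be a real vector space, W ⊆ V a subspace of finite dimension a, and R an associative unital ℝ-algebra. Let x be an element of the algebra (ExteriorAlgebra ℝ V) ⊗_ℝ R that lies in the ℝ-linear span of the set of elements (ι(w₁)·ι(w₂)) ⊗ r with w₁, w₂ ∈ W and r ∈ R, where ι : V → ExteriorAlgebra ℝ V is the canonical inclusion. Then x^N = 0 for every integer N > a. -/
/-!
A product of more than `dim W` vectors of `W` vanishes in the exterior algebra, since it is the
alternating map `ιMulti` evaluated at a linearly dependent family. Products of pure tensors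
multiply componentwise, so `x ^ N` lies in the span of the tensors `z ⊗ r` with `z` a product of
`2 * N > dim W` vectors of `W`, all of which are zero.
-/

open TensorProduct Pointwise

theorem Submodule.pow_eq_zero_of_mem_span_of_pow_subset_zero {K B : Type*} [CommSemiring K]
    [Semiring B] [Algebra K B] {s : Set B} {n : ℕ} (hs : s ^ n ⊆ {0}) {x : B}
    (hx : x ∈ span K s) : x ^ n = 0 := by
  have hxn : x ^ n ∈ span K (s ^ n) := span_pow (R := K) s n ▸ pow_mem_pow _ hx n
  simpa using span_mono hs hxn

namespace TensorProduct

variable {K A R : Type*} [CommSemiring K] [Semiring A] [Algebra K A] [Semiring R] [Algebra K R]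

theorem image2_tmul_mul_image2_tmul_subset (s s' : Set A) (t t' : Set R) :
    Set.image2 (· ⊗ₜ[K] ·) s t * Set.image2 (· ⊗ₜ[K] ·) s' t' ⊆
      Set.image2 (· ⊗ₜ[K] ·) (s * s') (t * t') := by
  rintro _ ⟨_, ⟨a, ha, r, hr, rfl⟩, _, ⟨a', ha', r', hr', rfl⟩, rfl⟩
  exact ⟨a * a', Set.mul_mem_mul ha ha', r * r', Set.mul_mem_mul hr hr',
    (Algebra.TensorProduct.tmul_mul_tmul a a' r r').symm⟩

theorem image2_tmul_pow_subset (s : Set A) (t : Set R) (n : ℕ) :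
    Set.image2 (· ⊗ₜ[K] ·) s t ^ n ⊆ Set.image2 (· ⊗ₜ[K] ·) (s ^ n) (t ^ n) := by
  induction n with
  | zero => simpa using (Algebra.TensorProduct.one_def (R := K) (A := A) (B := R)).symm
  | succ n ih =>
    simp only [pow_succ]
    exact (Set.mul_subset_mul_right ih).trans (image2_tmul_mul_image2_tmul_subset _ _ _ _)

end TensorProduct

namespace ExteriorAlgebra

variable {K V : Type*} [Field K] [AddCommGroup V] [Module K V]

theorem ιMulti_eq_zero_of_finrank_lt (W : Submodule K V) [FiniteDimensional K W] {n : ℕ}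
    (hn : Module.finrank K W < n) (v : Fin n → V) (hv : ∀ i, v i ∈ W) : ιMulti K n v = 0 := by
  refine (ιMulti K n).map_linearDependent v fun hli => hn.not_ge ?_
  have hliW : LinearIndependent K (fun i => (⟨v i, hv i⟩ : W)) :=
    LinearIndependent.of_comp W.subtype hli
  simpa using hliW.fintype_card_le_finrank

theorem image_ι_pow_subset_zero (W : Submodule K V) [FiniteDimensional K W] {n : ℕ}
    (hn : Module.finrank K W < n) : (ι K '' (W : Set V)) ^ n ⊆ {0} := by
  intro z hz
  obtain ⟨f, rfl⟩ := Set.mem_pow.mp hz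
  choose v hvW hv using fun i => (f i).2
  rw [Set.mem_singleton_iff, ← ιMulti_eq_zero_of_finrank_lt W hn v hvW, ιMulti_apply]
  simp only [hv]

end ExteriorAlgebra

/-- If `W ⊆ V` is a subspace of finite dimension `a` and `x` lies in the
`ℝ`-linear span of the elements `(ι w₁ * ι w₂) ⊗ r` with `w₁, w₂ ∈ W` and `r ∈ R` inside
the algebra `ExteriorAlgebra ℝ V ⊗[ℝ] R`, then `x ^ N = 0` for every `N > a`. -/
theorem pow_eq_zero_of_mem_span_exterior_deg_two
    (V : Type*) [AddCommGroup V] [Module ℝ V]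
    (W : Submodule ℝ V) [FiniteDimensional ℝ W]
    (a : ℕ) (ha : Module.finrank ℝ W = a)
    (R : Type*) [Ring R] [Algebra ℝ R]
    (x : ExteriorAlgebra ℝ V ⊗[ℝ] R)
    (hx : x ∈ Submodule.span ℝ
      {y : ExteriorAlgebra ℝ V ⊗[ℝ] R | ∃ w₁ ∈ W, ∃ w₂ ∈ W, ∃ r : R,
        y = (ExteriorAlgebra.ι ℝ w₁ * ExteriorAlgebra.ι ℝ w₂) ⊗ₜ[ℝ] r})
    (N : ℕ) (hN : a < N) :
    x ^ N = 0 := by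
  set ιW := ExteriorAlgebra.ι ℝ '' (W : Set V)
  have hS : {y : ExteriorAlgebra ℝ V ⊗[ℝ] R | ∃ w₁ ∈ W, ∃ w₂ ∈ W, ∃ r : R,
      y = (ExteriorAlgebra.ι ℝ w₁ * ExteriorAlgebra.ι ℝ w₂) ⊗ₜ[ℝ] r} ⊆
      Set.image2 (· ⊗ₜ[ℝ] ·) (ιW ^ 2) Set.univ := by
    rintro _ ⟨w₁, hw₁, w₂, hw₂, r, rfl⟩
    exact ⟨_, pow_two ιW ▸ Set.mul_mem_mul ⟨w₁, hw₁, rfl⟩ ⟨w₂, hw₂, rfl⟩, r, trivial, rfl⟩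
  have hιW : ιW ^ (2 * N) ⊆ {0} :=
    ExteriorAlgebra.image_ι_pow_subset_zero W (by omega)
  refine Submodule.pow_eq_zero_of_mem_span_of_pow_subset_zero ?_ hx
  calc _ ⊆ Set.image2 (· ⊗ₜ[ℝ] ·) (ιW ^ 2) (Set.univ : Set R) ^ N := Set.pow_subset_pow_left hS
    _ ⊆ Set.image2 (· ⊗ₜ[ℝ] ·) (ιW ^ (2 * N)) (Set.univ ^ N) := by
      rw [pow_mul]; exact TensorProduct.image2_tmul_pow_subset _ _ N
    _ ⊆ {0} := by
      rintro _ ⟨z, hz, r, -, rfl⟩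
      show z ⊗ₜ[ℝ] r = 0
      rw [hιW hz, zero_tmul]
end

section
/- Let R be an associative unital ℝ-algebra, and let n, k be positive integers. In the algebra B = R ⊗_ℝ ExteriorAlgebra ℝ (Fin n → ℝ), write e_i for the image under ι of the i-th standard basis vector. Given F : Fin n → Fin n → R, set Φ = Σ over all ordered pairs (i,j) with i < j of (F i j) ⊗ (e_i · e_j). Then Φ^k = Σ_{A ⊆ Fin n, |A| = 2k} c_A ⊗ (e_{s_1} · e_{s_2} ⋯ e_{s_{2k}}), where s_1 < s_2 < ⋯ < s_{2k} is the increasing enumeration of A and c_A = Σ_{α ∈ P(A)} sign(α) · (F a_1 b_1)·(F a_2 b_2)⋯(F a_k b_k). Here P(A) is the set of ordered pairings of A, i.e., sequences α = ((a_1,b_1),…,(a_k,b_k)) of pairs with a_t < b_t for each t and A equal to the disjoint union of the sets {a_t, b_t}; and sign(α) is the sign of the permutation of the 2k elements of A carrying the increasing enumeration (s_1, …, s_{2k}) to the sequence (a_1, b_1, a_2, b_2, …, a_k, b_k). -/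
open TensorProduct

/-- The number of inversions of a list: the number of pairs of positions `i < j`
whose entries satisfy `l[j] < l[i]`. For a list with distinct entries this computes
the parity of the permutation carrying the sorted list to `l`. -/
def listInversions {α : Type*} [LinearOrder α] : List α → ℕ
  | [] => 0
  | x :: xs => xs.countP (fun y => decide (y < x)) + listInversions xs

section ExtAux
variable {n : ℕ} {e : Fin n → ExteriorAlgebra ℝ (Fin n → ℝ)}
variable (he : ∀ i, e i = ExteriorAlgebra.ι ℝ (Pi.single i 1))
include he

lemma e_sq (i : Fin n) : e i * e i = 0 := by
  rw [he]; exact ExteriorAlgebra.ι_sq_zero _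

lemma e_swap (i j : Fin n) : e i * e j = - (e j * e i) := by
  rw [he, he, eq_neg_iff_add_eq_zero]
  exact ExteriorAlgebra.ι_add_mul_swap _ _

lemma e_mem_zero : ∀ (S : List (Fin n)) (x : Fin n), x ∈ S →
    e x * ((S.map e).prod) = 0 := by
  intro S
  induction S with
  | nil => intro x hx; simp at hx
  | cons y ys ih =>
    intro x hx
    rcases List.mem_cons.mp hx with h | h
    · subst h
      rw [List.map_cons, List.prod_cons, ← mul_assoc, e_sq he, zero_mul]
    · rw [List.map_cons, List.prod_cons, ← mul_assoc, e_swap he x y, neg_mul,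
        mul_assoc, ih x h, mul_zero, neg_zero]

lemma e_ordered_insert : ∀ (S : List (Fin n)), S.Pairwise (· ≤ ·) → ∀ x : Fin n, x ∉ S →
    e x * ((S.map e).prod)
      = (-1 : ℝ) ^ (S.countP (fun y => decide (y < x))) •
        (((List.orderedInsert (· ≤ ·) x S).map e).prod) := by
  intro S
  induction S with
  | nil => intro _ x _; simp
  | cons y ys ih =>
    intro hS x hx
    have hxy : x ≠ y := fun h => hx (h ▸ List.mem_cons_self)
    have hxys : x ∉ ys := fun h => hx (List.mem_cons_of_mem _ h)
    by_cases hle : x ≤ y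
    · have hxy' : x < y := lt_of_le_of_ne hle hxy
      have hcount : (y :: ys).countP (fun z => decide (z < x)) = 0 := by
        rw [List.countP_eq_zero]
        intro z hz
        have : y ≤ z := by
          rcases List.mem_cons.mp hz with h | h
          · exact h.ge
          · exact (List.pairwise_cons.mp hS).1 z h
        simp [not_lt.mpr (le_trans hxy'.le this)]
      rw [hcount, pow_zero, one_smul, List.orderedInsert, if_pos hle]
      simp [List.prod_cons]
    · have hyx : y < x := not_le.mp hle
      have hcount : (y :: ys).countP (fun z => decide (z < x))
          = ys.countP (fun z => decide (z < x)) + 1 := by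
        rw [List.countP_cons]
        simp [hyx]
      rw [List.orderedInsert, if_neg hle, List.map_cons, List.prod_cons,
        List.map_cons, List.prod_cons, ← mul_assoc, e_swap he x y, neg_mul, mul_assoc,
        ih (List.pairwise_cons.mp hS).2 x hxys, hcount, pow_succ]
      rw [mul_smul_comm]
      simp

omit he in
lemma sort_insert_eq {x : Fin n} {A : Finset (Fin n)} (hx : x ∉ A) :
    (insert x A).sort (· ≤ ·) = List.orderedInsert (· ≤ ·) x (A.sort (· ≤ ·)) := by
  have h1 : ((insert x A).sort (· ≤ ·) : Multiset (Fin n))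
      = ((x :: A.sort (· ≤ ·) : List (Fin n)) : Multiset (Fin n)) := by
    rw [Finset.sort_eq, Finset.insert_val, Multiset.ndinsert_of_notMem hx]
    show _ = (x ::ₘ (A.sort (· ≤ ·) : Multiset (Fin n)))
    rw [Finset.sort_eq]
  have h2 : ((insert x A).sort (· ≤ ·)).Perm (x :: A.sort (· ≤ ·)) := Quotient.exact h1
  exact List.Perm.eq_of_pairwise'
    (Finset.pairwise_sort _ _) (List.Pairwise.orderedInsert _ _ (Finset.pairwise_sort _ _))
    (h2.trans (List.perm_orderedInsert _ _ _).symm)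

lemma e_finset_insert {x : Fin n} {A : Finset (Fin n)} (hx : x ∉ A) :
    e x * (((A.sort (· ≤ ·)).map e).prod)
      = (-1 : ℝ) ^ ((A.sort (· ≤ ·)).countP (fun y => decide (y < x))) •
        ((((insert x A).sort (· ≤ ·)).map e).prod) := by
  rw [sort_insert_eq hx]
  exact e_ordered_insert he _ (Finset.pairwise_sort _ _) x
    (fun h => hx ((Finset.mem_sort _).mp h))

lemma e_list_prod : ∀ L : List (Fin n),
    (L.map e).prod
      = if L.Nodup then
          (-1 : ℝ) ^ listInversions L • (((L.toFinset.sort (· ≤ ·)).map e).prod)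
        else 0 := by
  intro L
  induction L with
  | nil => simp [listInversions]
  | cons x xs ih =>
    rw [List.map_cons, List.prod_cons, ih]
    by_cases hnd : xs.Nodup
    · rw [if_pos hnd]
      by_cases hx : x ∈ xs
      · rw [if_neg (by simp [List.nodup_cons, hx])]
        rw [mul_smul_comm, e_mem_zero he _ x (by
          rw [Finset.mem_sort]; exact List.mem_toFinset.mpr hx), smul_zero]
      · rw [if_pos (List.nodup_cons.mpr ⟨hx, hnd⟩)]
        rw [mul_smul_comm, e_finset_insert he (fun h => hx (List.mem_toFinset.mp h)),
          smul_smul, ← pow_add]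
        have hcount : (xs.toFinset.sort (· ≤ ·)).countP (fun y => decide (y < x))
            = xs.countP (fun y => decide (y < x)) := by
          have hperm : (xs.toFinset.sort (· ≤ ·)).Perm xs :=
            Quotient.exact (show ((xs.toFinset.sort (· ≤ ·) : List (Fin n)) :
                Multiset (Fin n)) = (xs : Multiset (Fin n)) by
              rw [Finset.sort_eq, List.toFinset, Multiset.toFinset_val,
                Multiset.dedup_eq_self.mpr (Multiset.coe_nodup.mpr hnd)])
          exact hperm.countP_eq _
        rw [hcount]
        have h3 : (x :: xs).toFinset = insert x xs.toFinset := by simp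
        rw [h3, show listInversions (x :: xs)
            = xs.countP (fun y => decide (y < x)) + listInversions xs from rfl, add_comm]
    · rw [if_neg hnd, if_neg (by simp [List.nodup_cons]; intro _; exact hnd),
        mul_zero]

end ExtAux

lemma sum_pow_expand {M : Type*} [Semiring M] {ι : Type*} [Fintype ι]
    (f : ι → M) : ∀ k : ℕ,
    (∑ i, f i) ^ k = ∑ α : Fin k → ι, ((List.finRange k).map fun t => f (α t)).prod := by
  intro k
  induction k with
  | zero => simp [List.finRange_zero]
  | succ k ih =>
    rw [pow_succ', ih, Finset.mul_sum]
    have key : ∀ α : Fin k → ι,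
        (∑ i, f i) * ((List.finRange k).map fun t => f (α t)).prod
          = ∑ i, f i * ((List.finRange k).map fun t => f (α t)).prod := by
      intro α; rw [Finset.sum_mul]
    simp_rw [key]
    rw [Finset.sum_comm]
    have hcomp := Equiv.sum_comp (Fin.consEquiv fun _ : Fin (k+1) => ι)
      (fun β => ((List.finRange (k+1)).map fun t => f (β t)).prod)
    rw [← hcomp, Fintype.sum_prod_type]
    apply Finset.sum_congr rfl
    intro i _
    apply Finset.sum_congr rfl
    intro α _
    rw [List.finRange_succ, List.map_cons, List.prod_cons, List.map_map]
    refine congrArg (f i * ·) (congrArg List.prod (List.map_congr_left ?_))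
    intro t _
    simp [Function.comp, Fin.cons_succ]

lemma tmul_list_prod {R : Type*} [Ring R] [Algebra ℝ R] {E : Type*} [Ring E]
    [Algebra ℝ E] {γ : Type*} (f : γ → R) (g : γ → E) : ∀ L : List γ,
    ((L.map fun t => f t ⊗ₜ[ℝ] g t).prod : R ⊗[ℝ] E) = (L.map f).prod ⊗ₜ[ℝ] (L.map g).prod := by
  intro L
  induction L with
  | nil => simp [Algebra.TensorProduct.one_def]
  | cons x xs ih => simp [List.prod_cons, ih, Algebra.TensorProduct.tmul_mul_tmul]

lemma flatMap_pair_prod {M : Type*} [Monoid M] {γ : Type*} (u v : γ → M) :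
    ∀ L : List γ, ((L.flatMap fun t => [u t, v t]).prod) = (L.map fun t => u t * v t).prod := by
  intro L
  induction L with
  | nil => simp
  | cons x xs ih => simp [List.flatMap_cons, List.prod_append, ih, mul_assoc]

lemma length_flatMap_pair {γ δ : Type*} (u v : γ → δ) :
    ∀ L : List γ, (L.flatMap fun t => [u t, v t]).length = 2 * L.length := by
  intro L
  induction L with
  | nil => simp
  | cons x xs ih => simp [List.flatMap_cons, ih]; ring


/-- Expansion of the `k`-th power of a curvature-like 2-form
`Φ = ∑_{i<j} F i j ⊗ (e i * e j)` in `R ⊗[ℝ] ExteriorAlgebra ℝ (Fin n → ℝ)`: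
`Φ ^ k = ∑_{A ⊆ [n], |A| = 2k} (∑_{α ∈ P(A)} sign α * ∏ₜ F aₜ bₜ) ⊗ e_{s₁} ⋯ e_{s₂ₖ}`,
where `P(A)` is the set of ordered pairings `α = ((a₁,b₁),…,(a_k,b_k))` of `A` with
`aₜ < bₜ`, `sign α = (-1)^(inversions of (a₁,b₁,…,a_k,b_k))` is the sign of the
permutation carrying the increasing enumeration `s₁ < ⋯ < s₂ₖ` of `A` to the flattened
sequence of `α`. -/
theorem curvature_two_form_pow_expansion
    (R : Type*) [Ring R] [Algebra ℝ R]
    (n k : ℕ) (hn : 0 < n) (hk : 0 < k)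
    (F : Fin n → Fin n → R)
    (e : Fin n → ExteriorAlgebra ℝ (Fin n → ℝ))
    (he : ∀ i, e i = ExteriorAlgebra.ι ℝ (Pi.single i 1)) :
    (∑ p ∈ Finset.univ.filter (fun p : Fin n × Fin n => p.1 < p.2),
        F p.1 p.2 ⊗ₜ[ℝ] (e p.1 * e p.2)) ^ k
      =
    ∑ A ∈ Finset.powersetCard (2 * k) (Finset.univ : Finset (Fin n)),
      (∑ α ∈ Finset.univ.filter (fun α : Fin k → Fin n × Fin n =>
          (∀ t, (α t).1 < (α t).2) ∧
          (((List.finRange k).flatMap fun t => [(α t).1, (α t).2]) : Multiset (Fin n))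
            = A.val),
        (-1 : R) ^ listInversions ((List.finRange k).flatMap fun t => [(α t).1, (α t).2])
          * ((List.finRange k).map fun t => F (α t).1 (α t).2).prod)
      ⊗ₜ[ℝ] ((A.sort (· ≤ ·)).map e).prod := by
  classical
  set B := R ⊗[ℝ] ExteriorAlgebra ℝ (Fin n → ℝ)
  set G : Fin n × Fin n → B :=
    fun p => if p.1 < p.2 then F p.1 p.2 ⊗ₜ[ℝ] (e p.1 * e p.2) else 0 with hG
  set flat : (Fin k → Fin n × Fin n) → List (Fin n) :=
    fun α => (List.finRange k).flatMap fun t => [(α t).1, (α t).2] with hflat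
  set T : (Fin k → Fin n × Fin n) → B := fun α =>
    ((-1 : R) ^ listInversions (flat α)
        * ((List.finRange k).map fun t => F (α t).1 (α t).2).prod)
      ⊗ₜ[ℝ] (((flat α).toFinset.sort (· ≤ ·)).map e).prod with hT
  -- Step 1: rewrite the base as a sum over all pairs
  have h1 : (∑ p ∈ Finset.univ.filter (fun p : Fin n × Fin n => p.1 < p.2),
      F p.1 p.2 ⊗ₜ[ℝ] (e p.1 * e p.2)) = ∑ p : Fin n × Fin n, G p := by
    rw [hG, Finset.sum_filter]
  rw [h1, sum_pow_expand G k]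
  -- Step 2: evaluate each term
  have hterm : ∀ α : Fin k → Fin n × Fin n,
      ((List.finRange k).map fun t => G (α t)).prod
        = if (∀ t, (α t).1 < (α t).2) ∧ (flat α).Nodup then T α else 0 := by
    intro α
    by_cases hlt : ∀ t, (α t).1 < (α t).2
    · have hmap : ((List.finRange k).map fun t => G (α t))
          = ((List.finRange k).map fun t =>
              F (α t).1 (α t).2 ⊗ₜ[ℝ] (e (α t).1 * e (α t).2)) :=
        List.map_congr_left fun t _ => if_pos (hlt t)
      rw [hmap, tmul_list_prod (fun t => F (α t).1 (α t).2)
        (fun t => e (α t).1 * e (α t).2) (List.finRange k)]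
      have h2 : ((List.finRange k).map fun t => e (α t).1 * e (α t).2).prod
          = ((flat α).map e).prod := by
        rw [← flatMap_pair_prod (fun t => e (α t).1) (fun t => e (α t).2) (List.finRange k)]
        rw [hflat, List.map_flatMap]
        rfl
      rw [h2, e_list_prod he (flat α)]
      by_cases hnd : (flat α).Nodup
      · rw [if_pos hnd, if_pos ⟨hlt, hnd⟩, hT]
        rw [tmul_smul, TensorProduct.smul_tmul', Algebra.smul_def, map_pow, map_neg,
          map_one]
      · rw [if_neg hnd, if_neg (fun h => hnd h.2), tmul_zero]
    · push_neg at hlt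
      obtain ⟨t, ht⟩ := hlt
      rw [if_neg (fun h => absurd (h.1 t) (not_lt.mpr ht))]
      apply List.prod_eq_zero
      exact List.mem_map.mpr ⟨t, List.mem_finRange t, if_neg (not_lt.mpr ht)⟩
  simp_rw [hterm]
  rw [← Finset.sum_filter (fun α : Fin k → Fin n × Fin n =>
    (∀ t, (α t).1 < (α t).2) ∧ (flat α).Nodup) T]
  -- Step 3: group by the underlying finset
  have hmaps : ∀ α ∈ Finset.univ.filter (fun α : Fin k → Fin n × Fin n =>
      (∀ t, (α t).1 < (α t).2) ∧ (flat α).Nodup),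
      (flat α).toFinset ∈ Finset.powersetCard (2 * k) (Finset.univ : Finset (Fin n)) := by
    intro α hα
    rw [Finset.mem_filter] at hα
    rw [Finset.mem_powersetCard_univ, List.toFinset_card_of_nodup hα.2.2, hflat,
      length_flatMap_pair, List.length_finRange]
  rw [← Finset.sum_fiberwise_of_maps_to hmaps T]
  -- Step 4: identify the fibers
  apply Finset.sum_congr rfl
  intro A hA
  rw [TensorProduct.sum_tmul]
  have hset : (Finset.univ.filter (fun α : Fin k → Fin n × Fin n =>
        (∀ t, (α t).1 < (α t).2) ∧ (flat α).Nodup)).filter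
          (fun α => (flat α).toFinset = A)
      = Finset.univ.filter (fun α : Fin k → Fin n × Fin n =>
          (∀ t, (α t).1 < (α t).2) ∧ ((flat α : Multiset (Fin n)) = A.val)) := by
    ext α
    simp only [Finset.mem_filter, Finset.mem_univ, true_and]
    constructor
    · rintro ⟨⟨hlt, hnd⟩, hAf⟩
      refine ⟨hlt, ?_⟩
      rw [← hAf]
      show ((flat α : Multiset (Fin n))) = (flat α).toFinset.val
      rw [List.toFinset, Multiset.toFinset_val,
        Multiset.dedup_eq_self.mpr (Multiset.coe_nodup.mpr hnd)]
    · rintro ⟨hlt, hAf⟩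
      have hnd : (flat α).Nodup := Multiset.coe_nodup.mp (hAf ▸ A.nodup)
      refine ⟨⟨hlt, hnd⟩, ?_⟩
      apply Finset.val_injective
      show (flat α).toFinset.val = A.val
      rw [List.toFinset, Multiset.toFinset_val,
        Multiset.dedup_eq_self.mpr (Multiset.coe_nodup.mpr hnd), hAf]
  rw [hset]
  apply Finset.sum_congr rfl
  intro α hα
  rw [Finset.mem_filter] at hα
  obtain ⟨-, hlt, hAf⟩ := hα
  have hnd : (flat α).Nodup := Multiset.coe_nodup.mp (hAf ▸ A.nodup)
  have hAα : (flat α).toFinset = A := by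
    apply Finset.val_injective
    show (flat α).toFinset.val = A.val
    rw [List.toFinset, Multiset.toFinset_val,
      Multiset.dedup_eq_self.mpr (Multiset.coe_nodup.mpr hnd), hAf]
  simp only [hT, hAα]
  simp only [hflat]
end
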